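/- arXiv:1707.08065 — 4 statements merged into one kernel-verified Lean document; each statement's English description precedes it below -/
import Mathlib

section
/- If d ≥ 2, then with probability one only finitely many of the vectors X_1, X_2, … are complete records, i.e. the total number of complete records ∑_{m ∈ ℕ} I_m is finite almost surely. -/
/-! If `X (n + 1)` is a complete record, then among `X 1, …, X (n + 1)` the last one is the strict
maximum of the first coordinate and, at the same time, of the second. By exchangeability of an
i.i.d. sample, the strict maximum of `n + 1` values sits at a given position with probability at
most `1 / (n + 1)` (the `n + 1` positions give disjoint, equally likely events), and the two
coordinates are independent, so a complete record at time `n + 1` has probability at most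
`1 / (n + 1) ^ 2`. This is summable, and Borel–Cantelli concludes. -/

open MeasureTheory ProbabilityTheory Filter Topology

/-- `X m` is a complete record: each of its components strictly exceeds the corresponding
component of all previous observations `X i`, `1 ≤ i < m`.  In particular `X 1` is a
complete record by convention (vacuously). -/
def IsCompleteRecord {Ω : Type*} {d : ℕ} (X : ℕ → Ω → Fin d → ℝ) (m : ℕ) (ω : Ω) : Prop :=
  ∀ i, 1 ≤ i → i < m → ∀ j, X i ω j < X m ω j

open scoped ENNReal NNReal

section StrictMax

variable {ι α : Type*}

def strictMaxAt [LT α] (i : ι) : Set (ι → α) := {w | ∀ k, k ≠ i → w k < w i}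

lemma pairwise_disjoint_strictMaxAt [Preorder α] :
    Pairwise (Function.onFun Disjoint (strictMaxAt : ι → Set (ι → α))) := by
  intro i j hij
  rw [Function.onFun, Set.disjoint_left]
  exact fun w hi hj => lt_asymm (hi j hij.symm) (hj i hij)

lemma preimage_comp_strictMaxAt [LT α] (e : ι ≃ ι) (i : ι) :
    (fun w : ι → α => w ∘ e) ⁻¹' strictMaxAt i = strictMaxAt (e i) := by
  ext w
  simp only [strictMaxAt, Set.mem_preimage, Set.mem_ofPred_eq, Function.comp_apply,
    ← e.forall_congr_right (q := fun k => k ≠ e i → w k < w (e i)), e.injective.ne_iff]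

variable [TopologicalSpace α] [LinearOrder α] [OrderClosedTopology α] [SecondCountableTopology α]
  [MeasurableSpace α] [OpensMeasurableSpace α]

lemma measurableSet_strictMaxAt [Countable ι] (i : ι) :
    MeasurableSet (strictMaxAt (α := α) i) := by
  simp only [strictMaxAt, Set.ofPred_forall]
  exact .iInter fun k => .iInter fun _ =>
    measurableSet_lt (measurable_pi_apply k) (measurable_pi_apply i)

variable [Fintype ι]

lemma pi_strictMaxAt_eq (ν : Measure α) [SigmaFinite ν] (i j : ι) :
    Measure.pi (fun _ : ι => ν) (strictMaxAt i) = Measure.pi (fun _ => ν) (strictMaxAt j) := by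
  classical
  have hmp := measurePreserving_arrowCongr' (fun _ : ι => ν) (fun _ => ν) (Equiv.swap i j)
    (MeasurableEquiv.refl α) fun _ => MeasurePreserving.id ν
  have hpre : MeasurableEquiv.arrowCongr' (Equiv.swap i j) (MeasurableEquiv.refl α) ⁻¹'
      strictMaxAt j = strictMaxAt i := by
    have h := preimage_comp_strictMaxAt (α := α) (Equiv.swap i j).symm j
    rwa [Equiv.symm_swap, Equiv.swap_apply_right] at h
  rw [← hpre, hmp.measure_preimage (measurableSet_strictMaxAt j).nullMeasurableSet]

lemma pi_strictMaxAt_le_inv_card (ν : Measure α) [IsProbabilityMeasure ν] (i : ι) :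
    Measure.pi (fun _ : ι => ν) (strictMaxAt i) ≤ (Fintype.card ι : ℝ≥0∞)⁻¹ := by
  rw [ENNReal.le_inv_iff_mul_le]
  calc Measure.pi (fun _ : ι => ν) (strictMaxAt i) * Fintype.card ι
      = ∑ j, Measure.pi (fun _ : ι => ν) (strictMaxAt j) := by
        simp [pi_strictMaxAt_eq ν _ i, mul_comm]
    _ = Measure.pi (fun _ : ι => ν) (⋃ j, strictMaxAt j) := by
        rw [measure_iUnion pairwise_disjoint_strictMaxAt measurableSet_strictMaxAt, tsum_fintype]
    _ ≤ 1 := prob_le_one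

end StrictMax

lemma pi_prod_setOf_fst_mem_and_snd_mem {ι α β : Type*} [Fintype ι] [MeasurableSpace α]
    [MeasurableSpace β] (μ : Measure α) (ν : Measure β) [SigmaFinite μ] [SigmaFinite ν]
    {s : Set (ι → α)} {t : Set (ι → β)} (hs : MeasurableSet s) (ht : MeasurableSet t) :
    Measure.pi (fun _ : ι => μ.prod ν) {w | (fun k => (w k).1) ∈ s ∧ (fun k => (w k).2) ∈ t} =
      Measure.pi (fun _ => μ) s * Measure.pi (fun _ => ν) t := by
  have hmp := measurePreserving_arrowProdEquivProdArrow α β ι (fun _ => μ) (fun _ => ν)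
  rw [← Measure.prod_prod, ← hmp.measure_preimage (hs.prod ht).nullMeasurableSet]
  rfl

lemma tsum_inv_add_one_sq_ne_top : ∑' n : ℕ, ((n + 1 : ℝ≥0∞) ^ 2)⁻¹ ≠ ∞ := by
  have hsum : Summable fun n : ℕ => (((n + 1 : ℕ) : ℝ≥0) ^ 2)⁻¹ := by
    rw [← NNReal.summable_coe]
    push_cast
    exact_mod_cast (summable_nat_add_iff 1).mpr (Real.summable_nat_pow_inv.mpr one_lt_two)
  convert ENNReal.tsum_coe_ne_top_iff_summable.mpr hsum using 3 with n
  rw [ENNReal.coe_inv (by positivity)]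
  push_cast
  rfl

lemma IsCompleteRecord.mem_strictMaxAt_last {Ω : Type*} {d : ℕ} {X : ℕ → Ω → Fin d → ℝ} {n : ℕ}
    {ω : Ω} (h : IsCompleteRecord X (n + 1) ω) (j : Fin d) :
    (fun k : Fin (n + 1) => X (k + 1) ω j) ∈ strictMaxAt (Fin.last n) := by
  intro k hk
  simpa using h (k + 1) le_add_self (by simpa using Fin.val_lt_last hk) j

section IIDSample

variable {Ω : Type*} [MeasurableSpace Ω] (P : Measure Ω) [IsProbabilityMeasure P] {d : ℕ}
  (X : ℕ → Ω → Fin d → ℝ) {j₀ j₁ : Fin d}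

lemma map_sample_pair_eq_pi_prod (hmeas : ∀ m, Measurable (X m))
    (hindep : iIndepFun (fun m : ℕ => X (m + 1)) P)
    (hident : ∀ m : ℕ, P.map (X (m + 1)) = P.map (X 1))
    (hj : IndepFun (fun ω => X 1 ω j₀) (fun ω => X 1 ω j₁) P) (n : ℕ) :
    P.map (fun ω (k : Fin n) => (X (k + 1) ω j₀, X (k + 1) ω j₁)) =
      Measure.pi fun _ => (P.map fun ω => X 1 ω j₀).prod (P.map fun ω => X 1 ω j₁) := by
  set proj : (Fin d → ℝ) → ℝ × ℝ := fun v => (v j₀, v j₁)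
  have hproj : Measurable proj := by fun_prop
  have hindep_proj : iIndepFun (fun (k : Fin n) => proj ∘ X (k + 1)) P :=
    (hindep.precomp (g := fun k : Fin n => (k : ℕ)) Fin.val_injective).comp
      (fun _ => proj) fun _ => hproj
  have hlaw (k : Fin n) : P.map (proj ∘ X (k + 1)) = P.map (proj ∘ X 1) :=
    ((IdentDistrib.mk (hmeas _).aemeasurable (hmeas 1).aemeasurable (hident k)).comp hproj).map_eq
  refine (hindep_proj.map_fun_eq_pi_map fun k => (hproj.comp (hmeas _)).aemeasurable).trans ?_
  rw [funext hlaw, ← (indepFun_iff_map_prod_eq_prod_map_map (by fun_prop) (by fun_prop)).mp hj]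
  rfl

lemma measure_isCompleteRecord_succ_le (hmeas : ∀ m, Measurable (X m))
    (hindep : iIndepFun (fun m : ℕ => X (m + 1)) P)
    (hident : ∀ m : ℕ, P.map (X (m + 1)) = P.map (X 1))
    (hj : IndepFun (fun ω => X 1 ω j₀) (fun ω => X 1 ω j₁) P) (n : ℕ) :
    P {ω | IsCompleteRecord X (n + 1) ω} ≤ ((n + 1 : ℝ≥0∞) ^ 2)⁻¹ := by
  set ν₀ := P.map fun ω => X 1 ω j₀
  set ν₁ := P.map fun ω => X 1 ω j₁
  have : IsProbabilityMeasure ν₀ := Measure.isProbabilityMeasure_map (by fun_prop)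
  have : IsProbabilityMeasure ν₁ := Measure.isProbabilityMeasure_map (by fun_prop)
  have hmax := measurableSet_strictMaxAt (α := ℝ) (Fin.last n)
  calc P {ω | IsCompleteRecord X (n + 1) ω}
      ≤ P ((fun ω (k : Fin (n + 1)) => (X (k + 1) ω j₀, X (k + 1) ω j₁)) ⁻¹'
          {w | (fun k => (w k).1) ∈ strictMaxAt (Fin.last n) ∧
            (fun k => (w k).2) ∈ strictMaxAt (Fin.last n)}) :=
        measure_mono fun ω h => ⟨h.mem_strictMaxAt_last j₀, h.mem_strictMaxAt_last j₁⟩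
    _ = Measure.pi (fun _ => ν₀) (strictMaxAt (Fin.last n)) *
          Measure.pi (fun _ => ν₁) (strictMaxAt (Fin.last n)) := by
        rw [← Measure.map_apply (by fun_prop) (by measurability),
          map_sample_pair_eq_pi_prod P X hmeas hindep hident hj,
          pi_prod_setOf_fst_mem_and_snd_mem _ _ hmax hmax]
    _ ≤ (Fintype.card (Fin (n + 1)) : ℝ≥0∞)⁻¹ * (Fintype.card (Fin (n + 1)) : ℝ≥0∞)⁻¹ :=
        mul_le_mul' (pi_strictMaxAt_le_inv_card ν₀ _) (pi_strictMaxAt_le_inv_card ν₁ _)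
    _ = ((n + 1 : ℝ≥0∞) ^ 2)⁻¹ := by
        rw [Fintype.card_fin, Nat.cast_add_one, ENNReal.inv_pow, sq]

end IIDSample

theorem finitely_many_complete_records_general
    {Ω : Type*} [MeasurableSpace Ω] (P : Measure Ω) [IsProbabilityMeasure P]
    (d : ℕ) (hd : 2 ≤ d) (X : ℕ → Ω → Fin d → ℝ)
    (hmeas : ∀ m, Measurable (X m))
    (hindep : iIndepFun (fun m : ℕ => X (m + 1)) P)
    (hident : ∀ m : ℕ, P.map (X (m + 1)) = P.map (X 1))
    (hcomp : iIndepFun (fun (j : Fin d) ω => X 1 ω j) P) :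
    ∀ᵐ ω ∂P, {m : ℕ | 1 ≤ m ∧ IsCompleteRecord X m ω}.Finite := by
  have hj : IndepFun (fun ω => X 1 ω ⟨0, by omega⟩) (fun ω => X 1 ω ⟨1, by omega⟩) P :=
    hcomp.indepFun (by simp [Fin.ext_iff])
  have hsum : ∑' n, P {ω | IsCompleteRecord X (n + 1) ω} ≠ ∞ :=
    ne_top_of_le_ne_top tsum_inv_add_one_sq_ne_top <| ENNReal.tsum_le_tsum
      (measure_isCompleteRecord_succ_le P X hmeas hindep hident hj)
  filter_upwards [ae_finite_setOfPred_mem hsum] with ω hω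
  refine (hω.image Nat.succ).subset ?_
  rintro m ⟨hm, hrec⟩
  exact ⟨m - 1, by simpa [Nat.sub_add_cancel hm] using hrec, by omega⟩

/-- If `d ≥ 2`, then almost surely only finitely many of the vectors
`X 1, X 2, …` are complete records. -/
theorem finitely_many_complete_records
    {Ω : Type*} [MeasurableSpace Ω] (P : Measure Ω) [IsProbabilityMeasure P]
    (d : ℕ) (hd : 2 ≤ d) (X : ℕ → Ω → Fin d → ℝ)
    (hmeas : ∀ m, Measurable (X m))
    (hindep : iIndepFun (fun m : ℕ => X (m + 1)) P)
    (hident : ∀ m : ℕ, P.map (X (m + 1)) = P.map (X 1))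
    (hcomp : iIndepFun (fun (j : Fin d) ω => X 1 ω j) P)
    (hcont : ∀ j : Fin d, Continuous fun t : ℝ => (P {ω | X 1 ω j ≤ t}).toReal) :
    ∀ᵐ ω ∂P, {m : ℕ | 1 ≤ m ∧ IsCompleteRecord X m ω}.Finite :=
  finitely_many_complete_records_general P d hd X hmeas hindep hident hcomp
end

section
/- For every integer d ≥ 2 and every k ∈ ℕ, the index T of the terminal complete record satisfies P(T = k) = k^{-d} · ∏_{m = k+1}^{∞} (1 − m^{-d}). -/
open MeasureTheory ProbabilityTheory Filter Topology

noncomputable section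

/-- `T = sup {m ∈ ℕ : X m is a complete record}`, the index of the terminal complete
record (for `d ≥ 2` the set of complete-record indices is a.s. finite, so this is the
index of the last complete record; `sSup` of an infinite set of naturals is junk `0`). -/
def terminalRecordIndex {Ω : Type*} {d : ℕ} (X : ℕ → Ω → Fin d → ℝ) (ω : Ω) : ℕ :=
  sSup {m : ℕ | 1 ≤ m ∧ IsCompleteRecord X m ω}


/-!
Fix a coordinate `j`. Its values are i.i.d. with a continuous distribution function, so ties have
probability zero and the first `n` values are ordered according to a uniformly random permutation
of `Fin n`. Counting permutations by where their left-to-right maxima sit (the value in the last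
position is free, unless it must be the maximum) shows that the events "observation `m` beats all
earlier ones in coordinate `j`" are independent with probabilities `1 / m`. Independence of the
coordinates turns this into: the complete-record events `R m` are independent with
`P (R m) = m⁻ᵈ`. Finally `T = k` exactly when `R k` occurs and no `R m` with `m > k` does, and
continuity of `P` along this countable intersection gives the infinite product.
-/

open Finset

section GeneralFacts

open ENNReal

lemma nullSingletonClass_of_continuous_cdf {μ : Measure ℝ} [IsProbabilityMeasure μ]
    (h : Continuous (cdf μ)) : NullSingletonClass μ where
  measure_singleton a := by
    rw [← measure_cdf μ, StieltjesFunction.measure_singleton,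
      h.continuousWithinAt.leftLim_eq, sub_self, ENNReal.ofReal_zero]

lemma MeasureTheory.Measure.pi_map_swap {ι κ α : Type*} [Fintype ι] [Fintype κ]
    [MeasurableSpace α] (μ : κ → Measure α) [∀ k, IsProbabilityMeasure (μ k)] :
    (Measure.pi fun _ : ι => Measure.pi μ).map Function.swap =
      Measure.pi fun k => Measure.pi fun _ : ι => μ k := by
  have hswap : Function.swap = MeasurableEquiv.curry κ ι α ∘
      MeasurableEquiv.piCongrLeft (fun _ => α) (Equiv.prodComm ι κ) ∘
        (MeasurableEquiv.curry ι κ α).symm := by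
    funext x k i
    simp [MeasurableEquiv.coe_piCongrLeft, Equiv.piCongrLeft_apply]
  simp_rw [← Measure.infinitePi_eq_pi]
  rw [hswap, ← Measure.map_map (by fun_prop) (by fun_prop),
    ← Measure.map_map (by fun_prop) (by fun_prop),
    Measure.infinitePi_map_curry_symm (fun _ k => μ k),
    ← Measure.infinitePi_map_curry (fun k _ => μ k)]
  exact congrArg _
    (Measure.infinitePi_map_piCongrLeft (fun q : κ × ι => μ q.1) (Equiv.prodComm ι κ))

lemma ENNReal.hasProd_toReal_of_le_one {ι : Type*} {f : ι → ℝ≥0∞} (hf : ∀ i, f i ≤ 1) :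
    HasProd (fun i => (f i).toReal) (∏' i, f i).toReal := by
  have hfin : ∏' i, f i ≠ ⊤ := ne_top_of_le_ne_top one_ne_top (tprod_le_one hf)
  simpa [HasProd, Function.comp_def, ENNReal.toReal_prod] using
    ((ENNReal.tendsto_toReal hfin).comp (ENNReal.multipliable_of_le_one hf).hasProd :)

lemma ProbabilityTheory.iIndep.measure_iInter_eq_tprod {Ω ι : Type*} [Countable ι]
    {mΩ : MeasurableSpace Ω} {μ : Measure Ω} [IsProbabilityMeasure μ]
    {m : ι → MeasurableSpace Ω} (hle : ∀ i, m i ≤ mΩ) (h : iIndep m μ) {s : ι → Set Ω}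
    (hs : ∀ i, MeasurableSet[m i] (s i)) :
    μ (⋂ i, s i) = ∏' i, μ (s i) := by
  refine (HasProd.tprod_eq ?_).symm
  have hlim := tendsto_measure_iInter_atTop (μ := μ) (s := fun t : Finset ι => ⋂ i ∈ t, s i)
    (fun t => (Finset.measurableSet_biInter t fun i _ => hle i _ (hs i)).nullMeasurableSet)
    (fun t t' htt' => Set.biInter_subset_biInter_left htt') ⟨∅, measure_ne_top _ _⟩
  rw [← Set.iInter_eq_iInter_finset] at hlim
  exact hlim.congr fun t => h.meas_biInter fun i _ => hs i

lemma ProbabilityTheory.iIndepSet.measureReal_inter_iInter_compl {Ω : Type*}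
    {mΩ : MeasurableSpace Ω} {μ : Measure Ω} [IsProbabilityMeasure μ] {s : ℕ → Set Ω}
    (h : iIndepSet s μ) (hs : ∀ i, MeasurableSet (s i)) :
    μ.real (s 0 ∩ ⋂ i, (s (i + 1))ᶜ) =
      μ.real (s 0) * ∏' i, (1 - μ.real (s (i + 1))) := by
  set u : ℕ → Set Ω := fun i => if i = 0 then s i else (s i)ᶜ
  have hu : ∀ i, MeasurableSet[MeasurableSpace.generateFrom {s i}] (u i) := fun i => by
    have hsi : MeasurableSet[MeasurableSpace.generateFrom {s i}] (s i) :=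
      MeasurableSpace.measurableSet_generateFrom rfl
    unfold u
    split_ifs
    exacts [hsi, hsi.compl]
  have hinter : s 0 ∩ ⋂ i, (s (i + 1))ᶜ = ⋂ i, u i := by
    simp [u, ← Set.inter_iInter_nat_succ u]
  rw [hinter, measureReal_def, ((iIndepSet_iff_iIndep s μ).mp h).measure_iInter_eq_tprod
    (fun i => MeasurableSpace.generateFrom_le (by simpa using hs i)) hu,
    (ENNReal.hasProd_toReal_of_le_one fun _ => prob_le_one).tprod_eq.symm]
  rw [tprod_eq_zero_mul' (f := fun i => (μ (u i)).toReal)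
    (ENNReal.hasProd_toReal_of_le_one (f := fun i => μ (u (i + 1))) fun _ =>
      prob_le_one).multipliable]
  simp [u, ← measureReal_def, probReal_compl_eq_one_sub (hs _)]

lemma ProbabilityTheory.iIndepSet_comp_add_of_measure_biInter_eq_prod {Ω : Type*}
    {mΩ : MeasurableSpace Ω} {μ : Measure Ω} {s : ℕ → Set Ω} (hs : ∀ m, MeasurableSet (s m))
    {p : ℕ → ℝ≥0∞} (h : ∀ S : Finset ℕ, (∀ m ∈ S, 1 ≤ m) → μ (⋂ m ∈ S, s m) = ∏ m ∈ S, p m)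
    {k : ℕ} (hk : 1 ≤ k) :
    iIndepSet (fun i => s (i + k)) μ := by
  refine (iIndepSet_iff_meas_biInter fun i => hs _).mpr fun S => ?_
  have hS : ∀ m ∈ S.image (· + k), 1 ≤ m := by simp only [Finset.mem_image]; omega
  rw [← Finset.set_biInter_finset_image (f := (· + k)) (g := s), h _ hS,
    Finset.prod_image fun _ _ _ _ h => Nat.add_right_cancel h]
  exact Finset.prod_congr rfl fun i _ => by simpa using (h {i + k} (by simp; omega)).symm

lemma Nat.sSup_eq_iff_isGreatest {s : Set ℕ} {k : ℕ} (hk : k ≠ 0) :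
    sSup s = k ↔ IsGreatest s k := by
  refine ⟨fun h => ?_, fun h => h.csSup_eq⟩
  have hne : s.Nonempty := Set.nonempty_iff_ne_empty.mpr fun he => hk (by simp [← h, he])
  have hbdd : BddAbove s := by
    by_contra hb
    exact hk (by rw [← h, csSup_of_not_bddAbove hb, csSup_empty]; rfl)
  exact h ▸ ⟨Nat.sSup_mem hne hbdd, fun m hm => le_csSup hbdd hm⟩

end GeneralFacts

section Records

variable {α β : Type*} {n : ℕ} {S : Finset ℕ}

/-- Position `p : Fin n` holds observation `p + 1`, so `S` lists record indices counted from `1`,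
as in `IsCompleteRecord`. -/
def recordSet (α : Type*) [LT α] (n : ℕ) (S : Finset ℕ) : Set (Fin n → α) :=
  {y | ∀ p : Fin n, (p : ℕ) + 1 ∈ S → ∀ i < p, y i < y p}

lemma mem_recordSet_congr [LT α] [LT β] {y : Fin n → α} {z : Fin n → β}
    (h : ∀ a b, y a < y b ↔ z a < z b) : y ∈ recordSet α n S ↔ z ∈ recordSet β n S := by
  simp only [recordSet, Set.mem_ofPred_eq, h]

lemma mem_recordSet_succ_iff [LT α] {y : Fin (n + 1) → α} :
    y ∈ recordSet α (n + 1) S ↔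
      (n + 1 ∈ S → ∀ i : Fin n, y i.castSucc < y (Fin.last n)) ∧
        y ∘ Fin.castSucc ∈ recordSet α n (S.erase (n + 1)) := by
  constructor
  · intro h
    refine ⟨fun hn i => h _ (by simpa using hn) _ (Fin.castSucc_lt_last i), fun p hp i hi => ?_⟩
    exact h p.castSucc (by simpa using (mem_erase.mp hp).2) i.castSucc (by simpa using hi)
  · rintro ⟨hlast, hinit⟩ p hp i hi
    induction p using Fin.lastCases with
    | last =>
      obtain ⟨i, rfl⟩ := Fin.eq_castSucc_of_ne_last (Fin.ne_last_of_lt hi)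
      exact hlast (by simpa using hp) i
    | cast p =>
      obtain ⟨i, rfl⟩ := Fin.eq_castSucc_of_ne_last
        (Fin.ne_last_of_lt (hi.trans (Fin.castSucc_lt_last p)))
      exact hinit p (mem_erase.mpr ⟨by simp [p.isLt.ne], hp⟩) i (by simpa using hi)

end Records

section PermutationCount

open Equiv

variable {n : ℕ}

def snocPerm (v : Fin (n + 1)) (τ : Perm (Fin n)) : Perm (Fin (n + 1)) :=
  Equiv.ofBijective (Fin.snoc (fun i => v.succAbove (τ i)) v) <| Finite.injective_iff_bijective.mp
    fun a b hab => by
      induction a using Fin.lastCases <;> induction b using Fin.lastCases <;>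
        simp_all [Fin.succAbove_ne, (Fin.succAbove_ne _ _).symm]

@[simp] lemma snocPerm_last (v : Fin (n + 1)) (τ : Perm (Fin n)) :
    snocPerm v τ (Fin.last n) = v := by
  simp [snocPerm]

@[simp] lemma snocPerm_castSucc (v : Fin (n + 1)) (τ : Perm (Fin n)) (i : Fin n) :
    snocPerm v τ i.castSucc = v.succAbove (τ i) := by
  simp [snocPerm]

lemma injective2_snocPerm : Function.Injective2 (snocPerm (n := n)) := fun v v' τ τ' h => by
  obtain rfl : v = v' := by simpa using congr($h (Fin.last n))
  exact ⟨rfl, Equiv.ext fun i => by simpa using congr($h i.castSucc)⟩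

def snocPermEquiv : Fin (n + 1) × Perm (Fin n) ≃ Perm (Fin (n + 1)) :=
  Equiv.ofBijective (Function.uncurry snocPerm) <| (Fintype.bijective_iff_injective_and_card _).mpr
    ⟨injective2_snocPerm.uncurry, by simp [Fintype.card_perm, Nat.factorial_succ]⟩

lemma Fin.forall_succAbove_lt_iff (v : Fin (n + 1)) :
    (∀ u : Fin n, v.succAbove u < v) ↔ v = Fin.last n := by
  refine ⟨fun h => ?_, by rintro rfl u; simp [Fin.castSucc_lt_last]⟩
  by_contra hv
  simpa [Fin.succAbove_lt_iff_castSucc_lt] using h (v.castPred hv)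

lemma snocPerm_mem_recordSet_iff {S : Finset ℕ} (v : Fin (n + 1)) (τ : Perm (Fin n)) :
    ⇑(snocPerm v τ) ∈ recordSet (Fin (n + 1)) (n + 1) S ↔
      (n + 1 ∈ S → v = Fin.last n) ∧ ⇑τ ∈ recordSet (Fin n) n (S.erase (n + 1)) := by
  rw [mem_recordSet_succ_iff, mem_recordSet_congr (z := ⇑τ)]
  · simp only [snocPerm_castSucc, snocPerm_last]
    rw [← τ.surjective.forall (p := fun u => v.succAbove u < v), Fin.forall_succAbove_lt_iff]
  · simp [(Fin.strictMono_succAbove v).lt_iff_lt]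

open Classical in
theorem card_perm_mem_recordSet_mul_prod {S : Finset ℕ} (hS : S ⊆ Icc 1 n) :
    #{σ : Perm (Fin n) | ⇑σ ∈ recordSet (Fin n) n S} * ∏ m ∈ S, m = n.factorial := by
  induction n generalizing S with
  | zero =>
    obtain rfl : S = ∅ := by simpa using hS
    simp [recordSet]
  | succ n ih =>
    have hS' : S.erase (n + 1) ⊆ Icc 1 n := fun m hm => by
      have := hS (mem_of_mem_erase hm)
      simp only [Finset.mem_Icc] at this ⊢
      have := ne_of_mem_erase hm
      omega
    have hcard : #{σ : Perm (Fin (n + 1)) | ⇑σ ∈ recordSet (Fin (n + 1)) (n + 1) S} =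
        #{v : Fin (n + 1) | n + 1 ∈ S → v = Fin.last n} *
          #{τ : Perm (Fin n) | ⇑τ ∈ recordSet (Fin n) n (S.erase (n + 1))} := by
      rw [← card_product, ← filter_product, univ_product_univ]
      refine (card_equiv snocPermEquiv fun ⟨v, τ⟩ => ?_).symm
      simp only [mem_filter, Finset.mem_univ, true_and, snocPermEquiv, Equiv.ofBijective_apply,
        Function.uncurry_apply_pair, snocPerm_mem_recordSet_iff]
    rw [hcard, Nat.factorial_succ, ← ih hS']
    by_cases hn : n + 1 ∈ S
    · rw [← mul_prod_erase S (fun m => m) hn]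
      simp only [hn, forall_const, filter_eq', Finset.mem_univ, ↓reduceIte,
        Finset.card_singleton, one_mul]
      ring
    · simp only [hn, IsEmpty.forall_iff, filter_true, card_univ, Fintype.card_fin,
        not_false_eq_true, erase_eq_of_notMem]
      ring

end PermutationCount

section OrderPatterns

open Equiv Function ENNReal

variable {n : ℕ}

def sortedBy (σ : Perm (Fin n)) : Set (Fin n → ℝ) := (· ∘ σ) ⁻¹' {z | StrictMono z}

lemma measurableSet_setOf_strictMono : MeasurableSet {z : Fin n → ℝ | StrictMono z} := by
  simp_rw [StrictMono, Set.ofPred_forall]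
  exact .iInter fun a => .iInter fun b => .iInter fun _ =>
    measurableSet_lt (measurable_pi_apply a) (measurable_pi_apply b)

lemma measurableSet_recordSet (S : Finset ℕ) : MeasurableSet (recordSet ℝ n S) := by
  simp_rw [recordSet, Set.ofPred_forall]
  exact .iInter fun p => .iInter fun _ => .iInter fun i => .iInter fun _ =>
    measurableSet_lt (measurable_pi_apply i) (measurable_pi_apply p)

lemma measurable_comp_perm (σ : Perm (Fin n)) : Measurable fun y : Fin n → ℝ => y ∘ σ :=
  measurable_pi_lambda _ fun i => measurable_pi_apply (σ i)

lemma measurableSet_sortedBy (σ : Perm (Fin n)) : MeasurableSet (sortedBy σ) :=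
  measurable_comp_perm σ measurableSet_setOf_strictMono

lemma lt_iff_symm_lt_of_mem_sortedBy {σ : Perm (Fin n)} {y : Fin n → ℝ} (hy : y ∈ sortedBy σ)
    (a b : Fin n) : y a < y b ↔ σ.symm a < σ.symm b := by
  simpa using hy.lt_iff_lt (a := σ.symm a) (b := σ.symm b)

lemma pairwise_disjoint_sortedBy : Pairwise (Disjoint on sortedBy (n := n)) := by
  intro σ τ hστ
  refine Set.disjoint_left.mpr fun y hσ hτ => hστ ?_
  have hinj : Injective y := by
    simpa [Function.comp_assoc] using hσ.injective.comp σ.symm.injective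
  have := (StrictMono.range_inj hσ hτ).mp (by simp [Set.range_comp])
  exact DFunLike.coe_injective (hinj.comp_left this)

lemma mem_iUnion_sortedBy {y : Fin n → ℝ} (hy : Injective y) : y ∈ ⋃ σ, sortedBy σ :=
  Set.mem_iUnion.mpr ⟨Tuple.sort y,
    (Tuple.monotone_sort y).strictMono_of_injective (hy.comp (Tuple.sort y).injective)⟩

variable (μ : Measure ℝ) [IsProbabilityMeasure μ]

lemma measurePreserving_comp_perm (σ : Perm (Fin n)) :
    MeasurePreserving (fun y : Fin n → ℝ => y ∘ σ) (Measure.pi fun _ => μ)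
      (Measure.pi fun _ => μ) := by
  convert measurePreserving_piCongrLeft (fun _ : Fin n => μ) σ.symm using 1
  funext y a
  simp [MeasurableEquiv.coe_piCongrLeft, Equiv.piCongrLeft_apply]

lemma measure_pi_setOf_apply_eq_apply [NullSingletonClass μ] {i j : Fin n} (hij : i ≠ j) :
    Measure.pi (fun _ => μ) {y | y i = y j} = 0 := by
  have hind : IndepFun (fun y : Fin n → ℝ => y i) (fun y => y j) (Measure.pi fun _ => μ) :=
    (iIndepFun_pi (X := fun _ => id) fun _ => aemeasurable_id).indepFun hij
  have hdiag : {y : Fin n → ℝ | y i = y j} = (fun y => (y i, y j)) ⁻¹' Set.diagonal ℝ :=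
    rfl
  rw [hdiag, ← Measure.map_apply (by fun_prop) measurableSet_diagonal,
    hind.map_prod_eq_prod_map_map (measurable_pi_apply i).aemeasurable
      (measurable_pi_apply j).aemeasurable, (measurePreserving_eval _ i).map_eq,
    (measurePreserving_eval _ j).map_eq, Measure.prod_apply measurableSet_diagonal]
  simp [Set.preimage, Set.diagonal]

lemma ae_pi_injective [NullSingletonClass μ] :
    ∀ᵐ y ∂(Measure.pi fun _ : Fin n => μ), Injective y := by
  have hsub : {y : Fin n → ℝ | ¬ Injective y} ⊆
      ⋃ i, ⋃ j, ⋃ (_ : i ≠ j), {y | y i = y j} := by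
    intro y hy
    simp only [Injective, not_forall] at hy
    obtain ⟨i, j, hij, hne⟩ := hy
    simp only [Set.mem_iUnion]
    exact ⟨i, j, hne, hij⟩
  exact measure_mono_null hsub <| measure_iUnion_null fun i => measure_iUnion_null fun j =>
    measure_iUnion_null fun hij => measure_pi_setOf_apply_eq_apply μ hij

lemma measure_eq_sum_inter_sortedBy [NullSingletonClass μ] {A : Set (Fin n → ℝ)}
    (hA : MeasurableSet A) :
    Measure.pi (fun _ => μ) A = ∑ σ, Measure.pi (fun _ => μ) (A ∩ sortedBy σ) := by
  have hnull : Measure.pi (fun _ => μ) (⋃ σ : Perm (Fin n), sortedBy σ)ᶜ = 0 :=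
    measure_mono_null (fun y hy => by simpa using mt mem_iUnion_sortedBy hy) (ae_pi_injective μ)
  rw [← measure_inter_conull hnull, Set.inter_iUnion, measure_iUnion _ fun σ =>
    hA.inter (measurableSet_sortedBy σ), tsum_fintype]
  exact fun σ τ h =>
    (pairwise_disjoint_sortedBy h).mono Set.inter_subset_right Set.inter_subset_right

lemma measure_sortedBy [NullSingletonClass μ] (σ : Perm (Fin n)) :
    Measure.pi (fun _ => μ) (sortedBy σ) = (n.factorial : ℝ≥0∞)⁻¹ := by
  have hconst : ∀ τ, Measure.pi (fun _ => μ) (sortedBy τ) =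
      Measure.pi (fun _ => μ) {z : Fin n → ℝ | StrictMono z} := fun τ =>
    (measurePreserving_comp_perm μ τ).measure_preimage
      measurableSet_setOf_strictMono.nullMeasurableSet
  have htotal := measure_eq_sum_inter_sortedBy μ (A := (Set.univ : Set (Fin n → ℝ))) .univ
  simp only [Set.univ_inter, hconst, measure_univ, Finset.sum_const, Finset.card_univ,
    Fintype.card_perm, Fintype.card_fin, nsmul_eq_mul] at htotal
  rw [hconst]
  exact ENNReal.eq_inv_of_mul_eq_one_left (by rw [mul_comm, htotal])

open Classical in
theorem measure_recordSet [NullSingletonClass μ] {S : Finset ℕ} (hS : S ⊆ Finset.Icc 1 n) :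
    Measure.pi (fun _ => μ) (recordSet ℝ n S) = ∏ m ∈ S, (m : ℝ≥0∞)⁻¹ := by
  have hterm : ∀ σ : Perm (Fin n), Measure.pi (fun _ => μ) (recordSet ℝ n S ∩ sortedBy σ) =
      if ⇑σ.symm ∈ recordSet (Fin n) n S then (n.factorial : ℝ≥0∞)⁻¹ else 0 := by
    intro σ
    split_ifs with h
    · rw [Set.inter_eq_right.mpr fun y hy =>
        (mem_recordSet_congr (lt_iff_symm_lt_of_mem_sortedBy hy)).mpr h, measure_sortedBy]
    · rw [Set.disjoint_iff_inter_eq_empty.mp <| Set.disjoint_left.mpr fun y hR hσ =>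
        h ((mem_recordSet_congr (lt_iff_symm_lt_of_mem_sortedBy hσ)).mp hR), measure_empty]
  set c := #{σ : Perm (Fin n) | ⇑σ ∈ recordSet (Fin n) n S}
  have hcard : #{σ : Perm (Fin n) | ⇑σ.symm ∈ recordSet (Fin n) n S} = c :=
    Finset.card_equiv (Equiv.inv _) fun σ => by simp [Equiv.Perm.inv_def]
  have hcount := card_perm_mem_recordSet_mul_prod hS
  have hc0 : (c : ℝ≥0∞) ≠ 0 := by
    exact_mod_cast left_ne_zero_of_mul (hcount ▸ n.factorial_ne_zero)
  rw [measure_eq_sum_inter_sortedBy μ (measurableSet_recordSet S)]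
  simp_rw [hterm]
  rw [Finset.sum_ite, Finset.sum_const_zero, add_zero, Finset.sum_const, nsmul_eq_mul, hcard,
    ← hcount, Nat.cast_mul, Nat.cast_prod]
  calc (c : ℝ≥0∞) * ((c : ℝ≥0∞) * ∏ m ∈ S, (m : ℝ≥0∞))⁻¹
      = c * 1 / (c * ∏ m ∈ S, (m : ℝ≥0∞)) := by rw [mul_one, div_eq_mul_inv]
    _ = (∏ m ∈ S, (m : ℝ≥0∞))⁻¹ := by
      rw [ENNReal.mul_div_mul_left _ _ hc0 (ENNReal.natCast_ne_top c), one_div]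
    _ = ∏ m ∈ S, (m : ℝ≥0∞)⁻¹ :=
      ENNReal.prod_inv_distrib fun _ _ _ _ _ => Or.inr (ENNReal.natCast_ne_top _)

end OrderPatterns

section CompleteRecords

open ENNReal

variable {Ω : Type*} {d : ℕ} {X : ℕ → Ω → Fin d → ℝ}

lemma biInter_isCompleteRecord_eq_preimage {n : ℕ} {S : Finset ℕ} (hS : S ⊆ Finset.Icc 1 n) :
    ⋂ m ∈ S, {ω | IsCompleteRecord X m ω} = (fun ω (i : Fin n) => X (i + 1) ω) ⁻¹'
      (Function.swap ⁻¹' Set.univ.pi fun _ => recordSet ℝ n S) := by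
  ext ω
  simp only [Set.mem_iInter, Set.mem_preimage, Set.mem_univ_pi, recordSet, Set.mem_ofPred_eq,
    Function.swap, IsCompleteRecord]
  constructor
  · intro h j p hp i hi
    exact h _ hp _ (Nat.le_add_left 1 i) (by simpa using hi) j
  · intro h m hm i hi him j
    have hmn := (Finset.mem_Icc.mp (hS hm)).2
    simpa [Nat.sub_add_cancel hi, Nat.sub_add_cancel (hi.trans him.le)] using
      h j ⟨m - 1, by omega⟩ (by simpa [Nat.sub_add_cancel (hi.trans him.le)] using hm)
        ⟨i - 1, by omega⟩ (by simp [Fin.lt_def]; omega)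

lemma setOf_terminalRecordIndex_eq {k : ℕ} (hk : 1 ≤ k) :
    {ω | terminalRecordIndex X ω = k} =
      {ω | IsCompleteRecord X k ω} ∩ ⋂ i, {ω | IsCompleteRecord X (i + 1 + k) ω}ᶜ := by
  ext ω
  simp only [terminalRecordIndex, Set.mem_ofPred_eq, Set.mem_inter_iff, Set.mem_iInter,
    Set.mem_compl_iff, Nat.sSup_eq_iff_isGreatest (Nat.one_le_iff_ne_zero.mp hk), IsGreatest,
    mem_upperBounds]
  constructor
  · rintro ⟨⟨-, hrec⟩, hub⟩
    exact ⟨hrec, fun i hi => by have := hub _ ⟨by omega, hi⟩; omega⟩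
  · rintro ⟨hrec, hlater⟩
    refine ⟨⟨hk, hrec⟩, fun m ⟨_, hm⟩ => not_lt.mp fun hkm => hlater (m - k - 1) ?_⟩
    rwa [show m - k - 1 + 1 + k = m by omega]

variable [MeasurableSpace Ω] {P : Measure Ω} [IsProbabilityMeasure P]

lemma measurableSet_isCompleteRecord (hmeas : ∀ m, Measurable (X m)) (m : ℕ) :
    MeasurableSet {ω | IsCompleteRecord X m ω} := by
  simp_rw [IsCompleteRecord, Set.ofPred_forall]
  exact .iInter fun i => .iInter fun _ => .iInter fun _ => .iInter fun j =>
    measurableSet_lt ((measurable_pi_apply j).comp (hmeas i))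
      ((measurable_pi_apply j).comp (hmeas m))

lemma map_sample_eq_pi (hmeas : ∀ m, Measurable (X m))
    (hindep : iIndepFun (fun m : ℕ => X (m + 1)) P)
    (hident : ∀ m : ℕ, P.map (X (m + 1)) = P.map (X 1))
    (hcomp : iIndepFun (fun (j : Fin d) ω => X 1 ω j) P) (n : ℕ) :
    P.map (fun ω (i : Fin n) => X (i + 1) ω) =
      Measure.pi fun _ : Fin n => Measure.pi fun j => P.map fun ω => X 1 ω j := by
  have hX1 : P.map (X 1) = Measure.pi fun j => P.map fun ω => X 1 ω j :=
    (iIndepFun_iff_map_fun_eq_pi_map fun j =>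
      ((measurable_pi_apply j).comp (hmeas 1)).aemeasurable).mp hcomp
  rw [(iIndepFun_iff_map_fun_eq_pi_map fun i => (hmeas _).aemeasurable).mp
    (hindep.precomp (g := fun i : Fin n => (i : ℕ)) Fin.val_injective)]
  simp only [hident, hX1]

theorem measure_biInter_isCompleteRecord (hmeas : ∀ m, Measurable (X m))
    (hindep : iIndepFun (fun m : ℕ => X (m + 1)) P)
    (hident : ∀ m : ℕ, P.map (X (m + 1)) = P.map (X 1))
    (hcomp : iIndepFun (fun (j : Fin d) ω => X 1 ω j) P)
    (hcont : ∀ j : Fin d, Continuous fun t : ℝ => (P {ω | X 1 ω j ≤ t}).toReal)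
    (S : Finset ℕ) (hS : ∀ m ∈ S, 1 ≤ m) :
    P (⋂ m ∈ S, {ω | IsCompleteRecord X m ω}) = ∏ m ∈ S, ((m : ℝ≥0∞) ^ d)⁻¹ := by
  have hmeas1 : ∀ j : Fin d, Measurable fun ω => X 1 ω j := fun j =>
    (measurable_pi_apply j).comp (hmeas 1)
  have hprob : ∀ j, IsProbabilityMeasure (P.map fun ω => X 1 ω j) := fun j =>
    Measure.isProbabilityMeasure_map (hmeas1 j).aemeasurable
  have hatom : ∀ j, NullSingletonClass (P.map fun ω => X 1 ω j) := fun j => by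
    refine nullSingletonClass_of_continuous_cdf ((hcont j).congr fun t => ?_)
    rw [cdf_eq_real, measureReal_def, Measure.map_apply (hmeas1 j) measurableSet_Iic]
    rfl
  have hSn : S ⊆ Finset.Icc 1 (S.sup id) := fun m hm =>
    Finset.mem_Icc.mpr ⟨hS m hm, Finset.le_sup (f := id) hm⟩
  have hrec := MeasurableSet.univ_pi fun _ : Fin d => measurableSet_recordSet (n := S.sup id) S
  have hswap : Measurable (Function.swap : (Fin (S.sup id) → Fin d → ℝ) → _) := by fun_prop
  rw [biInter_isCompleteRecord_eq_preimage hSn, ← Measure.map_apply (by fun_prop) (hswap hrec),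
    map_sample_eq_pi hmeas hindep hident hcomp,
    ← Measure.map_apply hswap hrec, Measure.pi_map_swap, Measure.pi_pi]
  simp_rw [measure_recordSet _ hSn, Finset.prod_const, Finset.card_univ, Fintype.card_fin,
    ← Finset.prod_pow, ENNReal.inv_pow]

end CompleteRecords

theorem terminal_record_index_distribution_general
    {Ω : Type*} [MeasurableSpace Ω] (P : Measure Ω) [IsProbabilityMeasure P]
    (d : ℕ) (X : ℕ → Ω → Fin d → ℝ)
    (hmeas : ∀ m, Measurable (X m))
    (hindep : iIndepFun (fun m : ℕ => X (m + 1)) P)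
    (hident : ∀ m : ℕ, P.map (X (m + 1)) = P.map (X 1))
    (hcomp : iIndepFun (fun (j : Fin d) ω => X 1 ω j) P)
    (hcont : ∀ j : Fin d, Continuous fun t : ℝ => (P {ω | X 1 ω j ≤ t}).toReal)
    (k : ℕ) (hk : 1 ≤ k) :
    (P {ω | terminalRecordIndex X ω = k}).toReal =
      (1 / (k : ℝ) ^ d) * ∏' m : ℕ, (1 - 1 / ((m + k + 1 : ℕ) : ℝ) ^ d) := by
  have hrec := measure_biInter_isCompleteRecord hmeas hindep hident hcomp hcont
  have hprob : ∀ m, 1 ≤ m → P.real {ω | IsCompleteRecord X m ω} = 1 / (m : ℝ) ^ d := by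
    intro m hm
    have h := hrec {m} (by simpa using hm)
    simp only [Finset.mem_singleton, Set.iInter_iInter_eq_left, Finset.prod_singleton] at h
    simp [measureReal_def, h]
  have hindep_records := (iIndepSet_comp_add_of_measure_biInter_eq_prod
    (measurableSet_isCompleteRecord hmeas) hrec hk).measureReal_inter_iInter_compl
      fun i => measurableSet_isCompleteRecord hmeas _
  simp only [zero_add] at hindep_records
  rw [← measureReal_def, setOf_terminalRecordIndex_eq hk, hindep_records, hprob k hk]
  congr 1
  exact tprod_congr fun i => by rw [hprob _ (by omega), add_right_comm]

/-- For `d ≥ 2` and every `k ≥ 1`,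
`P(T = k) = k⁻ᵈ * ∏_{m ≥ k+1} (1 - m⁻ᵈ)`. -/
theorem terminal_record_index_distribution
    {Ω : Type*} [MeasurableSpace Ω] (P : Measure Ω) [IsProbabilityMeasure P]
    (d : ℕ) (hd : 2 ≤ d) (X : ℕ → Ω → Fin d → ℝ)
    (hmeas : ∀ m, Measurable (X m))
    (hindep : iIndepFun (fun m : ℕ => X (m + 1)) P)
    (hident : ∀ m : ℕ, P.map (X (m + 1)) = P.map (X 1))
    (hcomp : iIndepFun (fun (j : Fin d) ω => X 1 ω j) P)
    (hcont : ∀ j : Fin d, Continuous fun t : ℝ => (P {ω | X 1 ω j ≤ t}).toReal)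
    (k : ℕ) (hk : 1 ≤ k) :
    (P {ω | terminalRecordIndex X ω = k}).toReal =
      (1 / (k : ℝ) ^ d) * ∏' m : ℕ, (1 - 1 / ((m + k + 1 : ℕ) : ℝ) ^ d) :=
  terminal_record_index_distribution_general P d X hmeas hindep hident hcomp hcont k hk
end
end

section
/- The limit lim_{d → ∞} ∑_{k=1}^{∞} k^{-(d-1)} · ∏_{m = k+1}^{∞} (1 − m^{-d}) = 1 holds, where d runs through the integers d ≥ 3; in the record interpretation this says that the expected index E(T(d)) of the terminal complete record in dimension d converges to 1 as d → ∞. -/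
open Filter Topology Finset

private lemma prod_one_sub_ge (f : ℕ → ℝ) (h0 : ∀ i, 0 ≤ f i) (h1 : ∀ i, f i ≤ 1)
    (s : Finset ℕ) : 1 - ∑ i ∈ s, f i ≤ ∏ i ∈ s, (1 - f i) := by
  induction s using Finset.cons_induction with
  | empty => simp
  | cons a s ha ih =>
    rw [Finset.prod_cons, Finset.sum_cons]
    have hP : (0:ℝ) ≤ ∏ i ∈ s, (1 - f i) :=
      Finset.prod_nonneg fun i _ => by linarith [h1 i]
    have hS : (0:ℝ) ≤ ∑ i ∈ s, f i := Finset.sum_nonneg fun i _ => h0 i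
    nlinarith [h0 a, h1 a]

private lemma tprod_one_sub_nonneg (f : ℕ → ℝ) (h1 : ∀ i, f i ≤ 1) :
    (0:ℝ) ≤ ∏' i, (1 - f i) := by
  by_cases h : Multipliable (fun i => 1 - f i)
  · exact ge_of_tendsto' h.hasProd fun s =>
      Finset.prod_nonneg fun i _ => by linarith [h1 i]
  · rw [tprod_eq_one_of_not_multipliable h]; norm_num

private lemma tprod_one_sub_le_one (f : ℕ → ℝ) (h0 : ∀ i, 0 ≤ f i) (h1 : ∀ i, f i ≤ 1) :
    ∏' i, (1 - f i) ≤ 1 := by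
  by_cases h : Multipliable (fun i => 1 - f i)
  · exact le_of_tendsto' h.hasProd fun s =>
      Finset.prod_le_one (fun i _ => by linarith [h1 i]) (fun i _ => by linarith [h0 i])
  · rw [tprod_eq_one_of_not_multipliable h]

private lemma tprod_one_sub_ge (f : ℕ → ℝ) (h0 : ∀ i, 0 ≤ f i) (h1 : ∀ i, f i ≤ 1)
    (hs : Summable f) {c : ℝ} (hc : ∑' i, f i ≤ c) :
    1 - c ≤ ∏' i, (1 - f i) := by
  have hc0 : 0 ≤ c := le_trans (tsum_nonneg h0) hc
  by_cases h : Multipliable (fun i => 1 - f i)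
  · refine ge_of_tendsto' h.hasProd fun s => ?_
    refine le_trans ?_ (prod_one_sub_ge f h0 h1 s)
    have := Summable.sum_le_tsum s (fun i _ => h0 i) hs
    linarith
  · rw [tprod_eq_one_of_not_multipliable h]; linarith

private lemma key_tsum_bound {e : ℕ} (he : 2 ≤ e) :
    ∑' m : ℕ, 1 / ((m:ℝ) + 2) ^ e ≤ (1/2 : ℝ) ^ (e - 2) := by
  apply Real.tsum_le_of_sum_range_le (fun m => by positivity)
  intro n
  have key : ∀ m : ℕ, 1 / ((m:ℝ) + 2) ^ e
      ≤ (1/2:ℝ)^(e-2) * (1 / ((m:ℝ) + 1) - 1 / ((m:ℝ) + 2)) := by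
    intro m
    have hx1 : (0:ℝ) < (m:ℝ) + 1 := by positivity
    have hx2 : (0:ℝ) < (m:ℝ) + 2 := by positivity
    have hrw : 1 / ((m:ℝ) + 1) - 1 / ((m:ℝ) + 2) = 1 / (((m:ℝ)+1) * ((m:ℝ)+2)) := by
      field_simp; ring
    rw [hrw]
    have hee : e = (e - 2) + 2 := (Nat.sub_add_cancel he).symm
    have hge : (2:ℝ)^(e-2) * (((m:ℝ)+1) * ((m:ℝ)+2)) ≤ ((m:ℝ) + 2) ^ e := by
      conv_rhs => rw [hee]
      rw [pow_add]
      have h1 : (2:ℝ)^(e-2) ≤ ((m:ℝ)+2)^(e-2) :=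
        pow_le_pow_left₀ (by norm_num) (by linarith [Nat.cast_nonneg (α := ℝ) m]) _
      have h2 : ((m:ℝ)+1) * ((m:ℝ)+2) ≤ ((m:ℝ)+2)^2 := by nlinarith [Nat.cast_nonneg (α := ℝ) m]
      have hpos : (0:ℝ) ≤ ((m:ℝ)+1) * ((m:ℝ)+2) := by positivity
      calc (2:ℝ)^(e-2) * (((m:ℝ)+1) * ((m:ℝ)+2))
          ≤ ((m:ℝ)+2)^(e-2) * (((m:ℝ)+1) * ((m:ℝ)+2)) :=
            mul_le_mul_of_nonneg_right h1 hpos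
        _ ≤ ((m:ℝ)+2)^(e-2) * ((m:ℝ)+2)^2 :=
            mul_le_mul_of_nonneg_left h2 (by positivity)
    calc 1 / ((m:ℝ) + 2) ^ e ≤ 1 / ((2:ℝ)^(e-2) * (((m:ℝ)+1) * ((m:ℝ)+2))) :=
          one_div_le_one_div_of_le (by positivity) hge
      _ = (1/2:ℝ)^(e-2) * (1 / (((m:ℝ)+1) * ((m:ℝ)+2))) := by
          rw [one_div_pow]
          field_simp
  calc ∑ m ∈ range n, 1 / ((m:ℝ) + 2) ^ e
      ≤ ∑ m ∈ range n, (1/2:ℝ)^(e-2) * (1 / ((m:ℝ) + 1) - 1 / ((m:ℝ) + 2)) :=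
        Finset.sum_le_sum fun m _ => key m
    _ = (1/2:ℝ)^(e-2) * ∑ m ∈ range n, (1 / ((m:ℝ) + 1) - 1 / ((m:ℝ) + 2)) := by
        rw [Finset.mul_sum]
    _ = (1/2:ℝ)^(e-2) * (1/(((0:ℕ):ℝ)+1) - 1/((n:ℝ)+1)) := by
        congr 1
        have hcg : ∀ m ∈ range n, 1 / ((m:ℝ) + 1) - 1 / ((m:ℝ) + 2)
            = (fun j : ℕ => 1/((j:ℝ)+1)) m - (fun j : ℕ => 1/((j:ℝ)+1)) (m+1) := by
          intro m _; push_cast; ring_nf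
        rw [Finset.sum_congr rfl hcg, Finset.sum_range_sub' (fun j : ℕ => 1/((j:ℝ)+1))]
    _ ≤ (1/2:ℝ)^(e-2) := by
        have h1 : (0:ℝ) ≤ 1/((n:ℝ)+1) := by positivity
        have h2 : (0:ℝ) ≤ (1/2:ℝ)^(e-2) := by positivity
        have h3 : (1/(((0:ℕ):ℝ)+1) - 1/((n:ℝ)+1)) ≤ 1 := by norm_num; positivity
        nlinarith

private lemma summable_shift (e : ℕ) (he : 2 ≤ e) :
    Summable (fun m : ℕ => 1 / ((m:ℝ) + 2) ^ e) := by
  have h1 := Real.summable_one_div_nat_pow.mpr (by omega : 1 < e)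
  have h2 := (summable_nat_add_iff (f := fun n : ℕ => 1 / (n:ℝ) ^ e) 2).mpr h1
  refine h2.congr fun m => ?_
  push_cast
  ring_nf

/-- `lim_{d → ∞} ∑_{k=1}^∞ k^{-(d-1)} * ∏_{m=k+1}^∞ (1 - m⁻ᵈ) = 1`,
where `d` runs through the integers `d ≥ 3`; in the record interpretation this is
`E(T(d)) → 1` as `d → ∞`.  (The sum over `k ≥ 1` is written via `k + 1` with `k : ℕ`,
and the product over `m ≥ k + 2` via `m + k + 2` with `m : ℕ`.) -/
theorem tendsto_expected_terminal_record_index_atTop_one :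
    Tendsto (fun d : ℕ =>
        ∑' k : ℕ, (1 / ((k + 1 : ℕ) : ℝ) ^ (d - 1)) *
          ∏' m : ℕ, (1 - 1 / ((m + k + 2 : ℕ) : ℝ) ^ d))
      atTop (𝓝 1) := by
  have hlow : Tendsto (fun d : ℕ => 1 - (1/2:ℝ)^(d-2)) atTop (𝓝 1) := by
    have h := (tendsto_pow_atTop_nhds_zero_of_lt_one (by norm_num : (0:ℝ) ≤ 1/2)
        (by norm_num : (1/2:ℝ) < 1)).comp (tendsto_sub_atTop_nat 2)
    simpa using tendsto_const_nhds.sub h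
  have hhigh : Tendsto (fun d : ℕ => 1 + (1/2:ℝ)^(d-3)) atTop (𝓝 1) := by
    have h := (tendsto_pow_atTop_nhds_zero_of_lt_one (by norm_num : (0:ℝ) ≤ 1/2)
        (by norm_num : (1/2:ℝ) < 1)).comp (tendsto_sub_atTop_nat 3)
    simpa using tendsto_const_nhds.add h
  refine tendsto_of_tendsto_of_tendsto_of_le_of_le' hlow hhigh ?_ ?_
  all_goals
    rw [eventually_atTop]
    refine ⟨3, fun d hd => ?_⟩
  -- common facts
  all_goals {
    have hfac0 : ∀ k m : ℕ, (0:ℝ) ≤ 1 / ((m + k + 2 : ℕ) : ℝ) ^ d := fun k m => by positivity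
    have hfac1 : ∀ k m : ℕ, 1 / ((m + k + 2 : ℕ) : ℝ) ^ d ≤ 1 := by
      intro k m
      rw [div_le_one (by positivity)]
      have h1 : (1:ℝ) ≤ ((m + k + 2 : ℕ) : ℝ) := by
        push_cast
        have := Nat.cast_nonneg (α := ℝ) m
        have := Nat.cast_nonneg (α := ℝ) k
        linarith
      exact one_le_pow₀ h1
    have hP0 : ∀ k : ℕ, (0:ℝ) ≤ ∏' m : ℕ, (1 - 1 / ((m + k + 2 : ℕ) : ℝ) ^ d) :=
      fun k => tprod_one_sub_nonneg _ (hfac1 k)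
    have hP1 : ∀ k : ℕ, ∏' m : ℕ, (1 - 1 / ((m + k + 2 : ℕ) : ℝ) ^ d) ≤ 1 :=
      fun k => tprod_one_sub_le_one _ (hfac0 k) (hfac1 k)
    set f : ℕ → ℝ := fun k => (1 / ((k + 1 : ℕ) : ℝ) ^ (d - 1)) *
        ∏' m : ℕ, (1 - 1 / ((m + k + 2 : ℕ) : ℝ) ^ d) with hf_def
    set g : ℕ → ℝ := fun k => 1 / ((k + 1 : ℕ) : ℝ) ^ (d - 1) with hg_def
    have hg : Summable g := by
      have h1 := Real.summable_one_div_nat_pow.mpr (by omega : 1 < d - 1)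
      have h2 := (summable_nat_add_iff (f := fun n : ℕ => 1 / (n:ℝ) ^ (d-1)) 1).mpr h1
      exact h2.congr fun m => rfl
    have hf0 : ∀ k, 0 ≤ f k := fun k => mul_nonneg (by positivity) (hP0 k)
    have hfg : ∀ k, f k ≤ g k := fun k =>
      mul_le_of_le_one_right (by positivity) (hP1 k)
    have hf : Summable f := Summable.of_nonneg_of_le hf0 hfg hg
    first
    | · -- lower bound
        have h1 : f 0 ≤ ∑' k, f k := Summable.le_tsum hf 0 fun j _ => hf0 j
        have h2 : 1 - (1/2:ℝ)^(d-2) ≤ f 0 := by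
          have hcast : ∀ m : ℕ, 1 / ((m + 0 + 2 : ℕ) : ℝ) ^ d = 1 / ((m:ℝ) + 2) ^ d := by
            intro m; push_cast; ring_nf
          have hs : Summable (fun m : ℕ => 1 / ((m + 0 + 2 : ℕ) : ℝ) ^ d) :=
            (summable_shift d (by omega)).congr fun m => (hcast m).symm
          have hc : ∑' m : ℕ, 1 / ((m + 0 + 2 : ℕ) : ℝ) ^ d ≤ (1/2:ℝ)^(d-2) := by
            rw [tsum_congr hcast]
            exact key_tsum_bound (by omega)
          have h3 := tprod_one_sub_ge _ (hfac0 0) (hfac1 0) hs hc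
          have h4 : f 0 = ∏' m : ℕ, (1 - 1 / ((m + 0 + 2 : ℕ) : ℝ) ^ d) := by
            simp [hf_def]
          rw [h4]
          exact h3
        linarith
    | · -- upper bound
        have h1 : ∑' k, f k ≤ ∑' k, g k := Summable.tsum_le_tsum hfg hf hg
        have h2 : ∑' k, g k = g 0 + ∑' k, g (k + 1) := Summable.tsum_eq_zero_add hg
        have h3 : g 0 = 1 := by simp [hg_def]
        have h4 : ∑' k, g (k + 1) ≤ (1/2:ℝ)^(d-3) := by
          have hcast : ∀ k : ℕ, g (k + 1) = 1 / ((k:ℝ) + 2) ^ (d-1) := by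
            intro k; simp only [hg_def]; push_cast; ring_nf
          rw [tsum_congr hcast]
          have := key_tsum_bound (e := d - 1) (by omega)
          have he : d - 1 - 2 = d - 3 := by omega
          rwa [he] at this
        calc ∑' k, f k ≤ ∑' k, g k := h1
          _ = g 0 + ∑' k, g (k + 1) := h2
          _ ≤ 1 + (1/2:ℝ)^(d-3) := by rw [h3]; linarith
  }
end

section
/- Let x_1, x_2, … be a sequence of numbers in (−∞, 0] such that ∑_{i=1}^{∞} x_i converges to a finite value in (−∞, 0]. Then, writing x_d := (x_1, …, x_d), one has P(η_{T(d)} ≤ x_d) → exp(∑_{i=1}^{∞} x_i) = lim_{d → ∞} P(η_1 ≤ x_d) as d → ∞. -/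
/-!
With probability tending to one as `d → ∞`, the first observation is the terminal complete
record. Indeed, `η_{n+1}` is a complete record with probability `(n+1)^{-d}`: each of its `d`
independent coordinates must be the strict maximum of `n + 1` i.i.d. atomless values, which
happens with probability `∫ F^n dF = 1/(n+1)`. Hence `P(T ≠ 1) ≤ ∑_{n ≥ 1} (n+1)^{-d} → 0`, and
off the event `T ≠ 1` we have `η_T = η_1`, whose distribution function at `x_d` is
`exp (x_1 + ⋯ + x_d)`.
-/

open MeasureTheory ProbabilityTheory Filter Topology

noncomputable section

open Set Real
open scoped ENNReal

def negExpMeasure : Measure ℝ :=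
  (volume.restrict (Iic 0)).withDensity fun t => ENNReal.ofReal (exp t)

lemma lintegral_ofReal_exp_Iic (a : ℝ) :
    ∫⁻ t in Iic a, ENNReal.ofReal (exp t) = ENNReal.ofReal (exp a) := by
  rw [← ofReal_integral_eq_lintegral_ofReal (integrableOn_exp_Iic a)
    (.of_forall fun t => (exp_pos t).le), integral_exp_Iic]

lemma negExpMeasure_apply {s : Set ℝ} (hs : MeasurableSet s) :
    negExpMeasure s = ∫⁻ t in s ∩ Iic 0, ENNReal.ofReal (exp t) := by
  rw [negExpMeasure, withDensity_apply _ hs, Measure.restrict_restrict hs]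

lemma negExpMeasure_Iic (b : ℝ) : negExpMeasure (Iic b) = ENNReal.ofReal (exp (min b 0)) := by
  rw [negExpMeasure_apply measurableSet_Iic, Iic_inter_Iic, lintegral_ofReal_exp_Iic]

instance : IsProbabilityMeasure negExpMeasure :=
  ⟨by rw [negExpMeasure_apply .univ, univ_inter, lintegral_ofReal_exp_Iic, exp_zero,
    ENNReal.ofReal_one]⟩

instance : NullSingletonClass negExpMeasure := by
  unfold negExpMeasure; infer_instance

lemma negExpMeasure_Iio (b : ℝ) : negExpMeasure (Iio b) = ENNReal.ofReal (exp (min b 0)) := by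
  rw [measure_congr Iio_ae_eq_Iic, negExpMeasure_Iic]

lemma lintegral_negExpMeasure_Iio_pow (n : ℕ) :
    ∫⁻ t, negExpMeasure (Iio t) ^ n ∂negExpMeasure = ENNReal.ofReal ((n + 1)⁻¹) := by
  have hexp : ∀ t ∈ Iic (0 : ℝ), ENNReal.ofReal (exp t) * ENNReal.ofReal (exp (min t 0)) ^ n
      = ENNReal.ofReal (exp ((n + 1) * t)) := fun t ht => by
    rw [min_eq_left ht, ← ENNReal.ofReal_pow (exp_pos t).le,
      ← ENNReal.ofReal_mul (exp_pos t).le, ← exp_nat_mul, ← exp_add]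
    ring_nf
  have hn : (0 : ℝ) < n + 1 := by positivity
  simp_rw [negExpMeasure_Iio]
  rw [negExpMeasure, lintegral_withDensity_eq_lintegral_mul _ (by fun_prop) (by fun_prop)]
  simp only [Pi.mul_apply]
  rw [setLIntegral_congr_fun measurableSet_Iic hexp,
    ← ofReal_integral_eq_lintegral_ofReal (integrableOn_exp_mul_Iic hn 0)
      (.of_forall fun t => (exp_pos _).le), integral_exp_mul_Iic hn]
  simp

lemma eq_negExpMeasure_of_Iic (ρ : Measure ℝ) [IsProbabilityMeasure ρ]
    (h : ∀ t ≤ 0, ρ (Iic t) = ENNReal.ofReal (exp t)) : ρ = negExpMeasure := by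
  refine Measure.ext_of_Iic ρ negExpMeasure fun a => ?_
  rcases le_total a 0 with ha | ha
  · rw [negExpMeasure_Iic, min_eq_left ha, h a ha]
  · rw [negExpMeasure_Iic, min_eq_right ha, exp_zero, ENNReal.ofReal_one]
    refine le_antisymm prob_le_one ?_
    calc 1 = ρ (Iic 0) := by rw [h 0 le_rfl, exp_zero, ENNReal.ofReal_one]
      _ ≤ ρ (Iic a) := measure_mono (Iic_subset_Iic.2 ha)

lemma lintegral_pi_prod_eq_pow {α ι : Type*} [MeasurableSpace α] [Fintype ι] (ν : Measure α)
    [IsProbabilityMeasure ν] {g : α → ℝ≥0∞} (hg : Measurable g) :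
    ∫⁻ t, ∏ j, g (t j) ∂(Measure.pi fun _ : ι => ν) = (∫⁻ s, g s ∂ν) ^ Fintype.card ι := by
  refine (lintegral_prod_eq_prod_lintegral_of_indepFun Finset.univ (fun j (t : ι → α) => g (t j))
    (iIndepFun_pi fun _ => hg.aemeasurable) fun j => hg.comp (measurable_pi_apply j)).trans ?_
  simp_rw [(measurePreserving_eval (fun _ : ι => ν) _).lintegral_comp hg]
  rw [Finset.prod_const, Finset.card_univ]

lemma measure_pi_forall_lt_last {ι : Type*} [Fintype ι] (ν : Measure ℝ) [IsProbabilityMeasure ν]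
    (n : ℕ) :
    (Measure.pi fun _ : Fin (n + 1) => Measure.pi fun _ : ι => ν)
        {v | ∀ (i : Fin n) (j : ι), v i.castSucc j < v (Fin.last n) j}
      = (∫⁻ t, ν (Iio t) ^ n ∂ν) ^ Fintype.card ι := by
  set μ := Measure.pi fun _ : ι => ν
  set S := {p : (ι → ℝ) × (Fin n → ι → ℝ) | ∀ i j, p.2 i j < p.1 j}
  have hS : MeasurableSet S := by
    simp only [S, ofPred_forall]
    exact .iInter fun i => .iInter fun j => measurableSet_lt (by fun_prop) (by fun_prop)
  have hpre : {v : Fin (n + 1) → ι → ℝ | ∀ (i : Fin n) (j : ι),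
        v i.castSucc j < v (Fin.last n) j}
      = MeasurableEquiv.piFinSuccAbove (fun _ => ι → ℝ) (Fin.last n) ⁻¹' S := by
    ext v
    simp [S, MeasurableEquiv.piFinSuccAbove_apply, Fin.init]
  have hslice (t : ι → ℝ) : (Measure.pi fun _ : Fin n => μ) (Prod.mk t ⁻¹' S)
      = ∏ j, ν (Iio (t j)) ^ n := by
    have : Prod.mk t ⁻¹' S = univ.pi fun _ => univ.pi fun j => Iio (t j) := by
      ext u; simp [S]
    simp only [this, Measure.pi_pi, μ, Finset.prod_const, Finset.card_univ, Fintype.card_fin,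
      Finset.prod_pow]
  rw [hpre, (measurePreserving_piFinSuccAbove (fun _ => μ) (Fin.last n)).measure_preimage
    hS.nullMeasurableSet, Measure.prod_apply hS, lintegral_congr hslice]
  exact lintegral_pi_prod_eq_pow ν ((Monotone.measurable fun _ _ h =>
    measure_mono (Iio_subset_Iio h)).pow_const n)

section Probability

variable {Ω : Type*} [MeasurableSpace Ω] (P : Measure Ω)

lemma map_eq_pi_negExpMeasure [IsProbabilityMeasure P] {d : ℕ} {X : Ω → Fin d → ℝ}
    (hX : Measurable X) (hindep : iIndepFun (fun j ω => X ω j) P)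
    (hexp : ∀ (j : Fin d) (t : ℝ), t ≤ 0 → P {ω | X ω j ≤ t} = ENNReal.ofReal (exp t)) :
    P.map X = Measure.pi fun _ => negExpMeasure := by
  have hXj (j : Fin d) : Measurable fun ω => X ω j := (measurable_pi_apply j).comp hX
  have hlaw (j : Fin d) : P.map (fun ω => X ω j) = negExpMeasure := by
    have := Measure.isProbabilityMeasure_map (μ := P) (hXj j).aemeasurable
    refine eq_negExpMeasure_of_Iic _ fun t ht => ?_
    rw [Measure.map_apply (hXj j) measurableSet_Iic]
    exact hexp j t ht
  simpa only [hlaw] using hindep.map_fun_eq_pi_map fun j => (hXj j).aemeasurable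

lemma measure_forall_le_eq_exp_sum {d : ℕ} {X : Ω → Fin d → ℝ} (hX : Measurable X)
    (hlaw : P.map X = Measure.pi fun _ => negExpMeasure) {x : ℕ → ℝ} (hx : ∀ i, x i ≤ 0) :
    P {ω | ∀ j : Fin d, X ω j ≤ x j} = ENNReal.ofReal (exp (∑ j ∈ Finset.range d, x j)) := by
  have hpre : {ω | ∀ j : Fin d, X ω j ≤ x j} = X ⁻¹' univ.pi fun j => Iic (x j) := by
    ext ω; simp [Pi.le_def]
  rw [hpre, ← Measure.map_apply hX (.univ_pi fun _ => measurableSet_Iic), hlaw, Measure.pi_pi]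
  simp_rw [negExpMeasure_Iic, min_eq_left (hx _)]
  rw [← ENNReal.ofReal_prod_of_nonneg fun _ _ => (exp_pos _).le, ← exp_sum,
    Fin.sum_univ_eq_sum_range]

omit [MeasurableSpace Ω] in
lemma isCompleteRecord_succ_iff {d : ℕ} (X : ℕ → Ω → Fin d → ℝ) (n : ℕ) (ω : Ω) :
    IsCompleteRecord X (n + 1) ω ↔ ∀ (i : Fin n) j, X (i + 1) ω j < X (n + 1) ω j := by
  refine ⟨fun h i => h (i + 1) (by omega) (by omega), fun h i hi1 hin => ?_⟩
  obtain ⟨k, rfl⟩ := Nat.exists_eq_add_of_le' hi1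
  exact h ⟨k, by omega⟩

lemma measure_isCompleteRecord_succ (ν : Measure ℝ) [IsProbabilityMeasure ν] {d : ℕ}
    {X : ℕ → Ω → Fin d → ℝ} (hmeas : ∀ m, Measurable (X m))
    (hindep : iIndepFun (fun m => X (m + 1)) P)
    (hlaw : ∀ m, P.map (X (m + 1)) = Measure.pi fun _ => ν) (n : ℕ) :
    P {ω | IsCompleteRecord X (n + 1) ω} = (∫⁻ t, ν (Iio t) ^ n ∂ν) ^ d := by
  set V : Ω → Fin (n + 1) → Fin d → ℝ := fun ω i => X (i + 1) ω
  have hV : Measurable V := measurable_pi_lambda _ fun i => hmeas _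
  have hlawV : P.map V = Measure.pi fun _ => Measure.pi fun _ => ν := by
    simpa only [hlaw] using (hindep.precomp Fin.val_injective).map_fun_eq_pi_map
      fun i => (hmeas _).aemeasurable
  have hpre : {ω | IsCompleteRecord X (n + 1) ω}
      = V ⁻¹' {v | ∀ (i : Fin n) j, v i.castSucc j < v (Fin.last n) j} := by
    ext ω
    simp [V, isCompleteRecord_succ_iff]
  rw [hpre, ← Measure.map_apply hV, hlawV, measure_pi_forall_lt_last, Fintype.card_fin]
  simp only [ofPred_forall]
  exact .iInter fun i => .iInter fun j => measurableSet_lt (by fun_prop) (by fun_prop)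

lemma measure_isCompleteRecord_succ_of_negExp {d : ℕ} {X : ℕ → Ω → Fin d → ℝ}
    (hmeas : ∀ m, Measurable (X m)) (hindep : iIndepFun (fun m => X (m + 1)) P)
    (hlaw : ∀ m, P.map (X (m + 1)) = Measure.pi fun _ => negExpMeasure) (n : ℕ) :
    P {ω | IsCompleteRecord X (n + 1) ω} = ENNReal.ofReal (((n : ℝ) + 1)⁻¹ ^ d) := by
  rw [measure_isCompleteRecord_succ P negExpMeasure hmeas hindep hlaw,
    lintegral_negExpMeasure_Iio_pow, ENNReal.ofReal_pow (by positivity)]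

omit [MeasurableSpace Ω] in
lemma terminalRecordIndex_eq_one {d : ℕ} {X : ℕ → Ω → Fin d → ℝ} {ω : Ω}
    (h : ∀ m, 2 ≤ m → ¬IsCompleteRecord X m ω) : terminalRecordIndex X ω = 1 := by
  have hset : {m | 1 ≤ m ∧ IsCompleteRecord X m ω} = {1} := by
    ext m
    simp only [mem_ofPred_eq, mem_singleton_iff]
    refine ⟨fun ⟨hm, hrec⟩ => by_contra fun hne => h m (by omega) hrec, ?_⟩
    rintro rfl
    exact ⟨le_rfl, fun i hi1 hi2 => by omega⟩
  rw [terminalRecordIndex, hset, csSup_singleton]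

lemma measure_terminalRecordIndex_ne_one_le {d : ℕ} (X : ℕ → Ω → Fin d → ℝ) :
    P {ω | terminalRecordIndex X ω ≠ 1} ≤ ∑' k, P {ω | IsCompleteRecord X (k + 2) ω} := by
  refine (measure_mono fun ω hω => ?_).trans (measure_iUnion_le _)
  by_contra hnot
  simp only [mem_iUnion, mem_ofPred_eq, not_exists] at hnot
  refine hω (terminalRecordIndex_eq_one fun m hm => ?_)
  obtain ⟨k, rfl⟩ := Nat.exists_eq_add_of_le' hm
  exact hnot k

lemma summable_inv_add_two_pow {d : ℕ} (hd : 2 ≤ d) :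
    Summable fun k : ℕ => ((k : ℝ) + 2)⁻¹ ^ d := by
  have := (summable_nat_add_iff 2).mpr (Real.summable_nat_pow_inv.mpr (one_lt_two.trans_le hd))
  exact this.congr fun k => by push_cast; rw [inv_pow]

lemma tendsto_tsum_inv_add_two_pow :
    Tendsto (fun d : ℕ => ∑' k : ℕ, ((k : ℝ) + 2)⁻¹ ^ d) atTop (𝓝 0) := by
  have hlt (k : ℕ) : ((k : ℝ) + 2)⁻¹ < 1 :=
    inv_lt_one_of_one_lt₀ (by linarith [k.cast_nonneg (α := ℝ)])
  simpa using tendsto_tsum_of_dominated_convergence (summable_inv_add_two_pow le_rfl)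
    (fun k => tendsto_pow_atTop_nhds_zero_of_lt_one (by positivity) (hlt k))
    (eventually_atTop.2 ⟨2, fun d hd k => by
      rw [norm_of_nonneg (by positivity)]
      exact pow_le_pow_of_le_one (by positivity) (hlt k).le hd⟩)

lemma tendsto_measure_terminalRecordIndex_ne_one (X : ∀ d : ℕ, ℕ → Ω → Fin d → ℝ)
    (hmeas : ∀ d m, Measurable (X d m)) (hindep : ∀ d, iIndepFun (fun m => X d (m + 1)) P)
    (hlaw : ∀ d m, P.map (X d (m + 1)) = Measure.pi fun _ => negExpMeasure) :
    Tendsto (fun d => (P {ω | terminalRecordIndex (X d) ω ≠ 1}).toReal) atTop (𝓝 0) := by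
  refine squeeze_zero' (.of_forall fun _ => ENNReal.toReal_nonneg)
    (eventually_atTop.2 ⟨2, fun d hd => ?_⟩) tendsto_tsum_inv_add_two_pow
  refine ENNReal.toReal_le_of_le_ofReal (tsum_nonneg fun _ => by positivity) ?_
  calc P {ω | terminalRecordIndex (X d) ω ≠ 1}
      ≤ ∑' k, P {ω | IsCompleteRecord (X d) (k + 1 + 1) ω} :=
        measure_terminalRecordIndex_ne_one_le P (X d)
    _ = ∑' k : ℕ, ENNReal.ofReal (((k : ℝ) + 2)⁻¹ ^ d) := by
        simp_rw [measure_isCompleteRecord_succ_of_negExp P (hmeas d) (hindep d) (hlaw d)]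
        push_cast
        ring_nf
    _ = ENNReal.ofReal (∑' k : ℕ, ((k : ℝ) + 2)⁻¹ ^ d) :=
        (ENNReal.ofReal_tsum_of_nonneg (fun _ => by positivity) (summable_inv_add_two_pow hd)).symm

lemma tendsto_toReal_measure_of_agree_outside [IsFiniteMeasure P] {ι : Type*} {l : Filter ι}
    {A B N : ι → Set Ω} {L : ℝ} (hAB : ∀ i, ∀ ω ∉ N i, (ω ∈ A i ↔ ω ∈ B i))
    (hB : Tendsto (fun i => (P (B i)).toReal) l (𝓝 L))
    (hN : Tendsto (fun i => (P (N i)).toReal) l (𝓝 0)) :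
    Tendsto (fun i => (P (A i)).toReal) l (𝓝 L) := by
  have hle {i : ι} {C D : Set Ω} (hCD : ∀ ω ∉ N i, ω ∈ C → ω ∈ D) :
      (P C).toReal ≤ (P D).toReal + (P (N i)).toReal :=
    (measureReal_mono fun ω hω => (em (ω ∈ N i)).elim .inr fun h => .inl (hCD ω h hω)).trans
      (measureReal_union_le D (N i))
  refine tendsto_of_tendsto_of_tendsto_of_le_of_le (by simpa using hB.sub hN)
    (by simpa using hB.add hN) (fun i => ?_) fun i => hle fun ω h => (hAB i ω h).1
  linarith [hle (i := i) fun ω h => (hAB i ω h).2]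

end Probability

/-- Let, for each dimension `d`, `η d 1, η d 2, …` be i.i.d. random
vectors in `ℝ^d` with independent standard negative exponential components, and let
`T(d)` be the index of the terminal complete record.  If `x 0, x 1, … ≤ 0` and
`∑ᵢ x i` converges (to a value in `(-∞, 0]`), then
`P(η_{T(d)} ≤ (x 0, …, x (d-1))) → exp (∑ᵢ x i) = lim_d P(η 1 ≤ (x 0, …, x (d-1)))`. -/
theorem terminal_record_df_approx_summable
    {Ω : Type*} [MeasurableSpace Ω] (P : Measure Ω) [IsProbabilityMeasure P]
    (η : ∀ d : ℕ, ℕ → Ω → Fin d → ℝ)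
    (hmeas : ∀ d m, Measurable (η d m))
    (hindep : ∀ d, iIndepFun (fun m : ℕ => η d (m + 1)) P)
    (hident : ∀ d m, P.map (η d (m + 1)) = P.map (η d 1))
    (hcomp : ∀ d, iIndepFun (fun (j : Fin d) ω => η d 1 ω j) P)
    (hexp : ∀ d (j : Fin d) (t : ℝ), t ≤ 0 →
      P {ω | η d 1 ω j ≤ t} = ENNReal.ofReal (Real.exp t))
    (x : ℕ → ℝ) (hx : ∀ i, x i ≤ 0) (hsum : Summable x) :
    Tendsto (fun d : ℕ =>
        (P {ω | ∀ j : Fin d, η d (terminalRecordIndex (η d) ω) ω j ≤ x j}).toReal)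
      atTop (𝓝 (Real.exp (∑' i, x i))) ∧
    Tendsto (fun d : ℕ => (P {ω | ∀ j : Fin d, η d 1 ω j ≤ x j}).toReal)
      atTop (𝓝 (Real.exp (∑' i, x i))) := by
  have hlaw (d : ℕ) : P.map (η d 1) = Measure.pi fun _ => negExpMeasure :=
    map_eq_pi_negExpMeasure P (hmeas d 1) (hcomp d) (hexp d)
  have hfirst : Tendsto (fun d : ℕ => (P {ω | ∀ j : Fin d, η d 1 ω j ≤ x j}).toReal)
      atTop (𝓝 (exp (∑' i, x i))) := by
    simp_rw [measure_forall_le_eq_exp_sum P (hmeas _ 1) (hlaw _) hx,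
      ENNReal.toReal_ofReal (exp_pos _).le]
    exact (continuous_exp.tendsto _).comp hsum.hasSum.tendsto_sum_nat
  have hbad := tendsto_measure_terminalRecordIndex_ne_one P η hmeas hindep
    fun d m => (hident d m).trans (hlaw d)
  refine ⟨tendsto_toReal_measure_of_agree_outside P (fun d ω hω => ?_) hfirst hbad, hfirst⟩
  simp only [mem_ofPred_eq, not_not] at hω
  simp only [mem_ofPred_eq, hω]
end
end
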